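/- arXiv:1811.00630 — 3 statements merged into one kernel-verified Lean document; each statement's English description precedes it below -/
import Mathlib

section
/- Let Φ_1,…,Φ_n ∈ K[G] and let {λ_t : t ∈ ℤ} be a subset of L satisfying v_L(λ_t) = t for all t ∈ ℤ and λ_{t_1}·λ_{t_2}^{−1} ∈ K whenever t_1 ≡ t_2 (mod p^n). Suppose that for all t ∈ ℤ and 1 ≤ i ≤ n we have v_L(Φ_i(λ_t)) = t + p^{n−i}b_i if 𝔞(r(t))_(n−i) ≥ 1, and v_L(Φ_i(λ_t)) > t + p^{n−i}b_i if 𝔞(r(t))_(n−i) = 0. Then there exist Ψ_1,…,Ψ_n ∈ K[G] such that ({Ψ_i},{λ_t}) is a Galois scaffold for L/K with precision c = 1. -/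
open scoped TensorProduct

noncomputable section

/-- The natural action of the group algebra `K[G]`, `G = Gal(L/K)`, on `L`. -/
def actK (K L : Type) [Field K] [Field L] [Algebra K L]
    (ξ : MonoidAlgebra K (L ≃ₐ[K] L)) (y : L) : L :=
  ξ.coeff.sum fun σ c => algebraMap K L c * σ y

/-- `vL` is a normalized (additive, surjective onto `ℤ`) valuation on the field `L`. -/
def IsNormValuation {L : Type} [Field L] (vL : L → WithTop ℤ) : Prop :=
  vL 0 = ⊤ ∧ (∀ x : L, x ≠ 0 → vL x ≠ ⊤) ∧
    (∀ x y : L, vL (x * y) = vL x + vL y) ∧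
    (∀ x y : L, min (vL x) (vL y) ≤ vL (x + y)) ∧
    (∀ m : ℤ, ∃ x : L, vL x = (m : WithTop ℤ))

/-- Bundled context: `vL` is the normalized valuation of `L`, Galois-invariant;
`K` embeds with value group `p^n ℤ` (so `L/K` is totally ramified of degree `p^n`);
`L` is complete; and the residue field (of `K`, hence of `L`) is perfect of
characteristic `p`. -/
def LocalCtx (p n : ℕ) (K L : Type) [Field K] [Field L] [Algebra K L]
    (vL : L → WithTop ℤ) : Prop :=
  IsNormValuation vL ∧
  (∀ (σ : L ≃ₐ[K] L) (x : L), vL (σ x) = vL x) ∧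
  (∀ k : K, k ≠ 0 → ∃ m : ℤ, vL (algebraMap K L k) = ((p ^ n * m : ℤ) : WithTop ℤ)) ∧
  (∀ f : ℕ → L,
    (∀ m : ℤ, ∃ N : ℕ, ∀ j k : ℕ, N ≤ j → N ≤ k → (m : WithTop ℤ) < vL (f j - f k)) →
    ∃ x : L, ∀ m : ℤ, ∃ N : ℕ, ∀ k : ℕ, N ≤ k → (m : WithTop ℤ) < vL (f k - x)) ∧
  (∀ x : K, (0 : WithTop ℤ) ≤ vL (algebraMap K L x) →
    ∃ y : K, (0 : WithTop ℤ) < vL (algebraMap K L (x - y ^ p)))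

/-- The `i`-th digit of `s` in base `p`. -/
def digit (p s i : ℕ) : ℕ := s / p ^ i % p

/-- `r : ℤ → S_{p^n}`, the least nonnegative residue modulo `p^n`. -/
def rres (p n : ℕ) (t : ℤ) : ℕ := (t % ((p : ℤ) ^ n)).toNat

/-- `𝔟(s) = s_(0) p^0 b_n + s_(1) p^1 b_{n-1} + ⋯ + s_(n-1) p^{n-1} b_1`. -/
def bfrak (p n : ℕ) (b : ℕ → ℤ) (s : ℕ) : ℤ :=
  ∑ i ∈ Finset.range n, (digit p s i : ℤ) * (p : ℤ) ^ i * b (n - i)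

/-- `𝔞 : S_{p^n} → S_{p^n}` is the inverse of the bijection `r ∘ (-𝔟)`. -/
def IsAfrak (p n : ℕ) (b : ℕ → ℤ) (afrak : ℕ → ℕ) : Prop :=
  ∀ s : ℕ, s < p ^ n → afrak s < p ^ n ∧ rres p n (-(bfrak p n b (afrak s))) = s

/-- `b 1 ≤ ⋯ ≤ b n` are the lower ramification breaks of `L/K`, counted with
multiplicity: for every `m`, the lower ramification group `G_m` has order
`p ^ #{i ∈ [1,n] : b i ≥ m}`. -/
def IsRamBreaks (p n : ℕ) (K L : Type) [Field K] [Field L] [Algebra K L]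
    (vL : L → WithTop ℤ) (b : ℕ → ℤ) : Prop :=
  (∀ i j : ℕ, 1 ≤ i → i ≤ j → j ≤ n → b i ≤ b j) ∧
  ∀ m : ℤ, Nat.card {σ : L ≃ₐ[K] L // ∀ x : L, (0 : WithTop ℤ) ≤ vL x →
      ((m + 1 : ℤ) : WithTop ℤ) ≤ vL (σ x - x)} =
    p ^ ((Finset.Icc 1 n).filter fun i => m ≤ b i).card

/-- `({Ψ_i}, {λ_t})` is a Galois scaffold for `L/K` with precision `c`. -/
def IsGaloisScaffold (p n : ℕ) (K L : Type) [Field K] [Field L] [Algebra K L]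
    (vL : L → WithTop ℤ) (b : ℕ → ℤ) (afrak : ℕ → ℕ)
    (Ψ : ℕ → MonoidAlgebra K (L ≃ₐ[K] L)) (lam : ℤ → L) (c : ℕ) : Prop :=
  (∀ t : ℤ, vL (lam t) = (t : WithTop ℤ)) ∧
  (∀ t₁ t₂ : ℤ, ((p : ℤ) ^ n) ∣ (t₁ - t₂) → ∃ k : K, lam t₁ = algebraMap K L k * lam t₂) ∧
  (∀ i : ℕ, 1 ≤ i → i ≤ n → actK K L (Ψ i) 1 = 0) ∧
  (∀ i : ℕ, 1 ≤ i → i ≤ n → ∀ t : ℤ,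
    (1 ≤ digit p (afrak (rres p n t)) (n - i) →
      ∃ u : K, vL (algebraMap K L u) = 0 ∧
        ((t + (p : ℤ) ^ (n - i) * b i + c : ℤ) : WithTop ℤ) ≤
          vL (actK K L (Ψ i) (lam t) -
            algebraMap K L u * lam (t + (p : ℤ) ^ (n - i) * b i))) ∧
    (digit p (afrak (rres p n t)) (n - i) = 0 →
      ((t + (p : ℤ) ^ (n - i) * b i + c : ℤ) : WithTop ℤ) ≤
        vL (actK K L (Ψ i) (lam t))))

/-- The map `a ⊗ b ↦ a · σ(b)`. -/
def phiAux (K L : Type) [Field K] [Field L] [Algebra K L] (σ : L ≃ₐ[K] L) :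
    L ⊗[K] L →ₗ[K] L :=
  TensorProduct.lift ((LinearMap.mul K L).compl₂ σ.toLinearMap)

/-- The map `φ : L ⊗_K L → L[G]`, `φ(a ⊗ b) = Σ_{σ ∈ G} a σ(b) σ`, with `L[G]`
realized as finitely supported functions `G →₀ L`. -/
def phi (K L : Type) [Field K] [Field L] [Algebra K L] [FiniteDimensional K L] :
    L ⊗[K] L →ₗ[K] ((L ≃ₐ[K] L) →₀ L) :=
  ∑ σ : L ≃ₐ[K] L, (Finsupp.lsingle σ).comp (phiAux K L σ)

/-- `φ(β)` lies in `K[G] ⊆ L[G]`, i.e. all its coefficients are in `K`. -/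
def PhiInKG (K L : Type) [Field K] [Field L] [Algebra K L] [FiniteDimensional K L]
    (β : L ⊗[K] L) : Prop :=
  ∀ σ : L ≃ₐ[K] L, ∃ k : K, phi K L β σ = algebraMap K L k

/-- `𝒯` is the set of Teichmüller representatives of `K`: a multiplicatively
closed set of representatives for the residue field. -/
def IsTeichmuller (K L : Type) [Field K] [Field L] [Algebra K L]
    (vL : L → WithTop ℤ) (𝒯 : Set K) : Prop :=
  (0 : K) ∈ 𝒯 ∧
  (∀ x ∈ 𝒯, x ≠ 0 → vL (algebraMap K L x) = 0) ∧
  (∀ t₁ ∈ 𝒯, ∀ t₂ ∈ 𝒯, t₁ * t₂ ∈ 𝒯) ∧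
  (∀ x : K, (0 : WithTop ℤ) ≤ vL (algebraMap K L x) →
    ∃! t : K, t ∈ 𝒯 ∧ (0 : WithTop ℤ) < vL (algebraMap K L (x - t)))

/-- The partial order on `(ℤ × ℤ)/H`, `H = ⟨(p^n, -p^n)⟩`, expressed on
representatives: `[q] ≤ [q']` iff some representative of `[q']` dominates `q`. -/
def cosetLE (p n : ℕ) (q q' : ℤ × ℤ) : Prop :=
  ∃ k : ℤ, q.1 ≤ q'.1 + k * (p : ℤ) ^ n ∧ q.2 ≤ q'.2 - k * (p : ℤ) ^ n

/-- Equality of cosets modulo `H = ⟨(p^n, -p^n)⟩`. -/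
def cosetEq (p n : ℕ) (q q' : ℤ × ℤ) : Prop :=
  ∃ k : ℤ, q'.1 = q.1 + k * (p : ℤ) ^ n ∧ q'.2 = q.2 - k * (p : ℤ) ^ n

/-- `A : ℤ → ℕ → K` records the coefficients of the expansion
`β = Σ_{(i,j) ∈ ℱ} A i j · π_L^i ⊗ π_L^j` with Teichmüller coefficients:
writing `β = Σ_{0 ≤ j < p^n} c_j ⊗ π_L^j`, each `c_j` is the convergent sum
`Σ_i A i j π_L^i` (partial sums up to `m` approximate `c_j` within `M_L^{m+1}`). -/
def IsExpansion (p n : ℕ) (K L : Type) [Field K] [Field L] [Algebra K L]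
    (vL : L → WithTop ℤ) (𝒯 : Set K) (πL : L) (β : L ⊗[K] L) (A : ℤ → ℕ → K) : Prop :=
  (∀ (i : ℤ) (j : ℕ), A i j ∈ 𝒯) ∧
  ∃ N : ℕ → ℤ, ∃ c : ℕ → L,
    (∀ (j : ℕ) (i : ℤ), i < N j → A i j = 0) ∧
    β = ∑ j ∈ Finset.range (p ^ n), c j ⊗ₜ[K] (πL ^ j) ∧
    (∀ j : ℕ, j < p ^ n → ∀ m : ℤ,
      (m : WithTop ℤ) <
        vL (c j - ∑ i ∈ Finset.Icc (N j) m, algebraMap K L (A i j) * πL ^ (i : ℤ)))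

/-- `R(β)`: the classes `[i,j]`, `(i,j) ∈ ℱ`, with `a_{ij} ≠ 0`. -/
def Rset (p n : ℕ) {K : Type} [Field K] (A : ℤ → ℕ → K) : Set (ℤ × ℤ) :=
  {q | ∃ (i : ℤ) (j : ℕ), j < p ^ n ∧ A i j ≠ 0 ∧ q = (i, (j : ℤ))}

/-- `D(β)`: the diagram of `β` (upward closure of `R(β)`). -/
def Dset (p n : ℕ) {K : Type} [Field K] (A : ℤ → ℕ → K) : Set (ℤ × ℤ) :=
  {q | ∃ r ∈ Rset p n A, cosetLE p n r q}

/-- `G(β)`: the minimal elements of `D(β)`. -/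
def Gset (p n : ℕ) {K : Type} [Field K] (A : ℤ → ℕ → K) : Set (ℤ × ℤ) :=
  {q | q ∈ Dset p n A ∧ ∀ q' ∈ Dset p n A, cosetLE p n q' q → cosetLE p n q q'}

/-- `dval = d(β) = min {i + j : [i,j] ∈ D(β)}`. -/
def IsDval (p n : ℕ) {K : Type} [Field K] (A : ℤ → ℕ → K) (dval : ℤ) : Prop :=
  IsLeast {v : ℤ | ∃ q ∈ Dset p n A, q.1 + q.2 = v} dval

/-- `N(β)`: the diagonal of `β`. -/
def Nset (p n : ℕ) {K : Type} [Field K] (A : ℤ → ℕ → K) (dval : ℤ) : Set (ℤ × ℤ) :=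
  {q | q ∈ Dset p n A ∧ q.1 + q.2 = dval}

/-- `|N(β)| = 2` (as a set of cosets mod `H`). -/
def NTwoCosets (p n : ℕ) {K : Type} [Field K] (A : ℤ → ℕ → K) (dval : ℤ) : Prop :=
  ∃ q₁ ∈ Nset p n A dval, ∃ q₂ ∈ Nset p n A dval, ¬ cosetEq p n q₁ q₂ ∧
    ∀ q ∈ Nset p n A dval, cosetEq p n q q₁ ∨ cosetEq p n q q₂

/-- `L/K` is semistable: there is `β ∈ L ⊗_K L` with `φ(β) ∈ K[G]`,
`p ∤ d(β)` and `|N(β)| = 2`. -/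
def Semistable (p n : ℕ) (K L : Type) [Field K] [Field L] [Algebra K L]
    [FiniteDimensional K L] (vL : L → WithTop ℤ) (𝒯 : Set K) (πL : L) : Prop :=
  ∃ (β : L ⊗[K] L) (A : ℤ → ℕ → K) (dval : ℤ),
    IsExpansion p n K L vL 𝒯 πL β A ∧ PhiInKG K L β ∧
    IsDval p n A dval ∧ ¬ ((p : ℤ) ∣ dval) ∧ NTwoCosets p n A dval

/-- `L/K` is semistable with precision `c`. -/
def SemistableWithPrec (p n : ℕ) (K L : Type) [Field K] [Field L] [Algebra K L]
    [FiniteDimensional K L] (vL : L → WithTop ℤ) (𝒯 : Set K) (πL : L) (c : ℕ) : Prop :=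
  ∃ (β : L ⊗[K] L) (A : ℤ → ℕ → K) (dval : ℤ),
    IsExpansion p n K L vL 𝒯 πL β A ∧ PhiInKG K L β ∧
    IsDval p n A dval ∧ ¬ ((p : ℤ) ∣ dval) ∧ NTwoCosets p n A dval ∧
    ∀ q ∈ Gset p n A, q ∉ Nset p n A dval → dval + c ≤ q.1 + q.2

/-- `L/K` is stable: semistable with `β` chosen so that `G(β) = N(β)`. -/
def Stable (p n : ℕ) (K L : Type) [Field K] [Field L] [Algebra K L]
    [FiniteDimensional K L] (vL : L → WithTop ℤ) (𝒯 : Set K) (πL : L) : Prop :=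
  ∃ (β : L ⊗[K] L) (A : ℤ → ℕ → K) (dval : ℤ),
    IsExpansion p n K L vL 𝒯 πL β A ∧ PhiInKG K L β ∧
    IsDval p n A dval ∧ ¬ ((p : ℤ) ∣ dval) ∧ NTwoCosets p n A dval ∧
    Gset p n A = Nset p n A dval

/-- `d` is the valuation of the different of `L/K`: the largest `d` such that
every `x` with `v_L(x) ≥ -d` has trace in `O_K`. -/
def IsDifferentExp (K L : Type) [Field K] [Field L] [Algebra K L]
    [FiniteDimensional K L] (vL : L → WithTop ℤ) (d : ℤ) : Prop :=
  IsGreatest {m : ℤ | ∀ x : L, ((-m : ℤ) : WithTop ℤ) ≤ vL x →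
    (0 : WithTop ℤ) ≤ vL (algebraMap K L (Algebra.trace K L x))} d

end

/-!
Take `Ψ_i = Φ_i - ε(Φ_i)`, with `ε` the augmentation of `K[G]`, so that `Ψ_i(1) = 0`.
Since `v_L(K^×) = p^n ℤ`, the terms of `∑_{0 ≤ j < p^n} c_j λ_j` have valuations in distinct
classes mod `p^n`; hence the `λ_j` form a `K`-basis of `L` and every expansion has a strict
leading term. Two consequences: an element of valuation `T` is a unit of `K` times `λ_T` up to
higher order, and `Φ_i` raises every valuation by at least `p^{n-i} b_i`. Applied to `1`, the
latter gives `v_L(ε(Φ_i)) ≥ p^{n-i} b_i`, and the inequality is strict because `v_L(ε(Φ_i))`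
lies in `p^n ℤ` while `p ∤ b_i`. So passing from `Φ_i` to `Ψ_i` changes `Φ_i(λ_t)` only beyond
precision `1`.
-/

lemma WithTop.coe_add_one_le_of_lt {m : ℤ} {a : WithTop ℤ} (h : (m : WithTop ℤ) < a) :
    ((m + 1 : ℤ) : WithTop ℤ) ≤ a := by
  cases a with
  | top => exact le_top
  | coe k => exact WithTop.coe_le_coe.mpr (WithTop.coe_lt_coe.mp h)

lemma AddValuation.map_sum_eq_of_lt {R Γ₀ : Type*} [Ring R]
    [LinearOrderedAddCommMonoidWithTop Γ₀]
    (v : AddValuation R Γ₀) {ι : Type*} [DecidableEq ι] {s : Finset ι} {f : ι → R} {j : ι}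
    (hj : j ∈ s) (hf : ∀ i ∈ s, i ≠ j → v (f j) < v (f i)) :
    v (∑ i ∈ s, f i) = v (f j) := by
  rcases eq_or_ne (v (f j)) ⊤ with htop | htop
  · rw [Finset.sum_eq_single_of_mem j hj fun i hi hij => absurd (hf i hi hij) (by simp [htop])]
  rw [← Finset.add_sum_erase s f hj]
  exact v.map_add_eq_of_lt_left
    (v.map_lt_sum htop fun i hi => hf i (Finset.mem_of_mem_erase hi) (Finset.ne_of_mem_erase hi))

lemma Int.not_pow_dvd_pow_sub_mul {p b : ℤ} (hp : p ≠ 0) (hb : ¬ p ∣ b) {i n : ℕ}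
    (hi : 1 ≤ i) (hin : i ≤ n) : ¬ p ^ n ∣ p ^ (n - i) * b := by
  rw [← Nat.sub_add_cancel hin, pow_add, Nat.add_sub_cancel,
    mul_dvd_mul_iff_left (pow_ne_zero _ hp)]
  exact fun h => hb ((dvd_pow_self p (by omega)).trans h)

namespace IsNormValuation

variable {L : Type} [Field L] {vL : L → WithTop ℤ}

lemma map_one (hv : IsNormValuation vL) : vL 1 = 0 := by
  obtain ⟨m, hm⟩ := WithTop.ne_top_iff_exists.mp (hv.2.1 1 one_ne_zero)
  have h := hv.2.2.1 1 1
  rw [one_mul, ← hm, ← WithTop.coe_add, WithTop.coe_eq_coe] at h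
  rw [← hm, WithTop.coe_eq_zero]
  omega

def toAddValuation (hv : IsNormValuation vL) : AddValuation L (WithTop ℤ) :=
  AddValuation.of vL hv.1 hv.map_one hv.2.2.2.1 hv.2.2.1

end IsNormValuation

section GroupAlgebraAction

variable {K L : Type} [Field K] [Field L] [Algebra K L]

def augmentation {G : Type} (ξ : MonoidAlgebra K G) : K := ξ.coeff.sum fun _ c => c

lemma actK_sub (ξ η : MonoidAlgebra K (L ≃ₐ[K] L)) (y : L) :
    actK K L (ξ - η) y = actK K L ξ y - actK K L η y := by
  unfold actK
  rw [MonoidAlgebra.coeff_sub]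
  exact Finsupp.sum_sub_index fun _ _ _ => by rw [map_sub, sub_mul]

lemma actK_single_one (c : K) (y : L) :
    actK K L (MonoidAlgebra.single 1 c) y = algebraMap K L c * y := by
  simp [actK, MonoidAlgebra.coeff_single]

lemma actK_sub_single_one (ξ : MonoidAlgebra K (L ≃ₐ[K] L)) (c : K) (y : L) :
    actK K L (ξ - MonoidAlgebra.single 1 c) y = actK K L ξ y - algebraMap K L c * y := by
  rw [actK_sub, actK_single_one]

lemma actK_one (ξ : MonoidAlgebra K (L ≃ₐ[K] L)) :
    actK K L ξ 1 = algebraMap K L (augmentation ξ) := by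
  simp [actK, augmentation, Finsupp.sum, map_sum]

lemma actK_smul (ξ : MonoidAlgebra K (L ≃ₐ[K] L)) (c : K) (y : L) :
    actK K L ξ (c • y) = c • actK K L ξ y := by
  simp only [actK, Finsupp.sum, Finset.smul_sum, map_smul, mul_smul_comm]

lemma actK_sum (ξ : MonoidAlgebra K (L ≃ₐ[K] L)) {ι : Type*} (s : Finset ι) (f : ι → L) :
    actK K L ξ (∑ i ∈ s, f i) = ∑ i ∈ s, actK K L ξ (f i) := by
  simp only [actK, Finsupp.sum, map_sum, Finset.mul_sum]
  exact Finset.sum_comm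

end GroupAlgebraAction

section ValueLattice

variable {K L : Type} [Field K] [Field L] [Algebra K L] (v : AddValuation L (WithTop ℤ))
  {N : ℕ} {lam : ℤ → L}

lemma valuation_smul (c : K) (x : L) : v (c • x) = v (algebraMap K L c) + v x := by
  rw [Algebra.smul_def, v.map_mul]

lemma exists_valuation_smul_lam_eq
    (hK : ∀ k : K, k ≠ 0 → ∃ m : ℤ, v (algebraMap K L k) = ((N * m : ℤ) : WithTop ℤ))
    (hlam : ∀ t : ℤ, v (lam t) = t) {c : K} (hc : c ≠ 0) (t : ℤ) :
    ∃ m : ℤ, v (c • lam t) = ((N * m + t : ℤ) : WithTop ℤ) := by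
  obtain ⟨m, hm⟩ := hK c hc
  exact ⟨m, by rw [valuation_smul, hm, hlam, ← WithTop.coe_add]⟩

lemma exists_leading_term
    (hK : ∀ k : K, k ≠ 0 → ∃ m : ℤ, v (algebraMap K L k) = ((N * m : ℤ) : WithTop ℤ))
    (hlam : ∀ t : ℤ, v (lam t) = t) {c : Fin N → K} (hc : c ≠ 0) :
    ∃ j, c j ≠ 0 ∧ ∀ i ≠ j, v (c j • lam j) < v (c i • lam i) := by
  classical
  obtain ⟨j₀, hj₀⟩ := Function.ne_iff.mp hc
  obtain ⟨j, hj, hmin⟩ := (Finset.univ.filter (c · ≠ 0)).exists_min_image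
    (fun i => v (c i • lam i)) ⟨j₀, by simpa using hj₀⟩
  rw [Finset.mem_filter] at hj
  obtain ⟨m, hm⟩ := exists_valuation_smul_lam_eq v hK hlam hj.2 j
  refine ⟨j, hj.2, fun i hij => ?_⟩
  by_cases hci : c i = 0
  · rw [hci, zero_smul, v.map_zero, hm]
    exact WithTop.coe_lt_top _
  obtain ⟨m', hm'⟩ := exists_valuation_smul_lam_eq v hK hlam hci i
  refine lt_of_le_of_ne (hmin i (by simpa using hci)) fun heq => hij (Fin.ext ?_)
  rw [hm, hm', WithTop.coe_eq_coe] at heq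
  have hdiff : (N : ℤ) ∣ (i : ℤ) - j := ⟨m - m', by linarith⟩
  have hlt : |(i : ℤ) - j| < N := abs_sub_lt_iff.mpr ⟨by omega, by omega⟩
  exact_mod_cast (sub_eq_zero.mp (Int.eq_zero_of_abs_lt_dvd hdiff hlt))

lemma valuation_sum_smul_lam_le
    (hK : ∀ k : K, k ≠ 0 → ∃ m : ℤ, v (algebraMap K L k) = ((N * m : ℤ) : WithTop ℤ))
    (hlam : ∀ t : ℤ, v (lam t) = t) (c : Fin N → K) (i : Fin N) :
    v (∑ j, c j • lam j) ≤ v (c i • lam i) := by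
  rcases eq_or_ne c 0 with rfl | hc
  · simp
  obtain ⟨j, -, hlead⟩ := exists_leading_term v hK hlam hc
  rw [v.map_sum_eq_of_lt (Finset.mem_univ j) fun i _ => hlead i]
  rcases eq_or_ne i j with rfl | hij
  exacts [le_rfl, (hlead i hij).le]

lemma linearIndependent_lam
    (hK : ∀ k : K, k ≠ 0 → ∃ m : ℤ, v (algebraMap K L k) = ((N * m : ℤ) : WithTop ℤ))
    (hlam : ∀ t : ℤ, v (lam t) = t) :
    LinearIndependent K fun i : Fin N => lam i := by
  rw [Fintype.linearIndependent_iff]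
  intro c hsum
  by_contra hc
  obtain ⟨j, hj, hlead⟩ :=
    exists_leading_term v hK hlam (Function.ne_iff.mpr (not_forall.mp hc))
  obtain ⟨m, hm⟩ := exists_valuation_smul_lam_eq v hK hlam hj j
  have := v.map_sum_eq_of_lt (Finset.mem_univ j) fun i _ => hlead i
  rw [hsum, v.map_zero, hm] at this
  exact WithTop.top_ne_coe this

lemma exists_eq_sum_smul_lam [FiniteDimensional K L]
    (hK : ∀ k : K, k ≠ 0 → ∃ m : ℤ, v (algebraMap K L k) = ((N * m : ℤ) : WithTop ℤ))
    (hlam : ∀ t : ℤ, v (lam t) = t) (hN : Module.finrank K L = N) (x : L) :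
    ∃ c : Fin N → K, ∑ i, c i • lam i = x := by
  have hspan := (linearIndependent_lam v hK hlam).span_eq_top_of_card_eq_finrank'
    (by rw [Fintype.card_fin, hN])
  exact Submodule.mem_span_range_iff_exists_fun K |>.mp (hspan ▸ Submodule.mem_top)

lemma exists_unit_sub_lam_le [FiniteDimensional K L]
    (hK : ∀ k : K, k ≠ 0 → ∃ m : ℤ, v (algebraMap K L k) = ((N * m : ℤ) : WithTop ℤ))
    (hlam : ∀ t : ℤ, v (lam t) = t) (hN : Module.finrank K L = N)
    (hlamK : ∀ t₁ t₂ : ℤ, (N : ℤ) ∣ (t₁ - t₂) →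
      ∃ k : K, lam t₁ = algebraMap K L k * lam t₂)
    {x : L} {T : ℤ} (hx : v x = T) :
    ∃ u : K, v (algebraMap K L u) = 0 ∧
      ((T + 1 : ℤ) : WithTop ℤ) ≤ v (x - algebraMap K L u * lam T) := by
  obtain ⟨c, rfl⟩ := exists_eq_sum_smul_lam v hK hlam hN x
  have hc : c ≠ 0 := by
    rintro rfl
    simp at hx
  obtain ⟨j, hj, hlead⟩ := exists_leading_term v hK hlam hc
  obtain ⟨m, hm⟩ := exists_valuation_smul_lam_eq v hK hlam hj j
  rw [v.map_sum_eq_of_lt (Finset.mem_univ j) fun i _ => hlead i, hm, WithTop.coe_eq_coe] at hx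
  obtain ⟨k, hk⟩ := hlamK j T ⟨-m, by linarith⟩
  have hjT : c j • lam j = algebraMap K L (c j * k) * lam T := by
    rw [Algebra.smul_def, hk, map_mul, mul_assoc]
  refine ⟨c j * k, ?_, ?_⟩
  · have hval := hm
    rw [hjT, v.map_mul, hlam, hx] at hval
    simpa using hval
  · rw [← Finset.add_sum_erase _ _ (Finset.mem_univ j), hjT, add_sub_cancel_left]
    refine WithTop.coe_add_one_le_of_lt (v.map_lt_sum (by simp) fun i hi => ?_)
    rw [← hx, ← hm]
    exact hlead i (Finset.ne_of_mem_erase hi)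

lemma add_le_valuation_actK [FiniteDimensional K L]
    (hK : ∀ k : K, k ≠ 0 → ∃ m : ℤ, v (algebraMap K L k) = ((N * m : ℤ) : WithTop ℤ))
    (hlam : ∀ t : ℤ, v (lam t) = t) (hN : Module.finrank K L = N)
    {ξ : MonoidAlgebra K (L ≃ₐ[K] L)} {δ : ℤ}
    (hξ : ∀ t : ℤ, ((t + δ : ℤ) : WithTop ℤ) ≤ v (actK K L ξ (lam t))) (x : L) :
    v x + δ ≤ v (actK K L ξ x) := by
  obtain ⟨c, rfl⟩ := exists_eq_sum_smul_lam v hK hlam hN x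
  rw [actK_sum]
  refine v.map_le_sum fun i _ => ?_
  calc v (∑ j, c j • lam j) + δ
      ≤ v (c i • lam i) + δ := by gcongr; exact valuation_sum_smul_lam_le v hK hlam c i
    _ = v (algebraMap K L (c i)) + ((i + δ : ℤ) : WithTop ℤ) := by
        rw [valuation_smul, hlam, add_assoc, WithTop.coe_add]
    _ ≤ v (actK K L ξ (c i • lam i)) := by
        rw [actK_smul, valuation_smul]
        gcongr
        exact hξ i

lemma add_one_le_valuation_augmentation [FiniteDimensional K L]
    (hK : ∀ k : K, k ≠ 0 → ∃ m : ℤ, v (algebraMap K L k) = ((N * m : ℤ) : WithTop ℤ))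
    (hlam : ∀ t : ℤ, v (lam t) = t) (hN : Module.finrank K L = N)
    {ξ : MonoidAlgebra K (L ≃ₐ[K] L)} {δ : ℤ} (hδ : ¬ (N : ℤ) ∣ δ)
    (hξ : ∀ t : ℤ, ((t + δ : ℤ) : WithTop ℤ) ≤ v (actK K L ξ (lam t))) :
    ((δ + 1 : ℤ) : WithTop ℤ) ≤ v (algebraMap K L (augmentation ξ)) := by
  have hle := add_le_valuation_actK v hK hlam hN hξ 1
  rw [v.map_one, zero_add, actK_one] at hle
  rcases eq_or_ne (augmentation ξ) 0 with h0 | h0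
  · simp [h0]
  obtain ⟨m, hm⟩ := hK _ h0
  rw [hm] at hle ⊢
  refine WithTop.coe_add_one_le_of_lt (lt_of_le_of_ne hle fun h => hδ ⟨m, ?_⟩)
  exact_mod_cast h

end ValueLattice

theorem stmt_0_general (p n : ℕ) (hp : p.Prime)
    (K L : Type) [Field K] [Field L] [Algebra K L] [IsGalois K L] [FiniteDimensional K L]
    (hdeg : Nat.card (L ≃ₐ[K] L) = p ^ n)
    (vL : L → WithTop ℤ) (hctx : LocalCtx p n K L vL)
    (b : ℕ → ℤ)
    (hpb : ∀ i : ℕ, 1 ≤ i → i ≤ n → ¬ ((p : ℤ) ∣ b i))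
    (afrak : ℕ → ℕ)
    (Φ : ℕ → MonoidAlgebra K (L ≃ₐ[K] L)) (lam : ℤ → L)
    (hlam1 : ∀ t : ℤ, vL (lam t) = (t : WithTop ℤ))
    (hlam2 : ∀ t₁ t₂ : ℤ, ((p : ℤ) ^ n) ∣ (t₁ - t₂) →
      ∃ k : K, lam t₁ = algebraMap K L k * lam t₂)
    (hyp : ∀ i : ℕ, 1 ≤ i → i ≤ n → ∀ t : ℤ,
      (1 ≤ digit p (afrak (rres p n t)) (n - i) →
        vL (actK K L (Φ i) (lam t)) = ((t + (p : ℤ) ^ (n - i) * b i : ℤ) : WithTop ℤ)) ∧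
      (digit p (afrak (rres p n t)) (n - i) = 0 →
        ((t + (p : ℤ) ^ (n - i) * b i : ℤ) : WithTop ℤ) < vL (actK K L (Φ i) (lam t)))) :
    ∃ Ψ : ℕ → MonoidAlgebra K (L ≃ₐ[K] L),
      IsGaloisScaffold p n K L vL b afrak Ψ lam 1 := by
  obtain ⟨hv, -, hK, -⟩ := hctx
  let v := hv.toAddValuation
  have hN : Module.finrank K L = p ^ n := by
    rw [← IsGalois.card_aut_eq_finrank, hdeg]
  have hK' : ∀ k : K, k ≠ 0 →
      ∃ m : ℤ, v (algebraMap K L k) = (((p ^ n : ℕ) * m : ℤ) : WithTop ℤ) := by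
    simp only [Nat.cast_pow]
    exact hK
  have hlam : ∀ t : ℤ, v (lam t) = t := hlam1
  refine ⟨fun i => Φ i - MonoidAlgebra.single 1 (augmentation (Φ i)), hlam1, hlam2,
    fun i _ _ => by rw [actK_sub_single_one, actK_one, mul_one, sub_self], fun i hi hin t => ?_⟩
  set δ := (p : ℤ) ^ (n - i) * b i
  have hΦ (s : ℤ) : ((s + δ : ℤ) : WithTop ℤ) ≤ v (actK K L (Φ i) (lam s)) := by
    rcases Nat.eq_zero_or_pos (digit p (afrak (rres p n s)) (n - i)) with hd | hd
    exacts [((hyp i hi hin s).2 hd).le, ((hyp i hi hin s).1 hd).ge]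
  have hδ : ¬ ((p ^ n : ℕ) : ℤ) ∣ δ := by
    rw [Nat.cast_pow]
    exact Int.not_pow_dvd_pow_sub_mul (mod_cast hp.ne_zero) (hpb i hi hin) hi hin
  have hε :
      ((t + δ + 1 : ℤ) : WithTop ℤ) ≤ v (algebraMap K L (augmentation (Φ i)) * lam t) := by
    rw [v.map_mul, hlam, add_rotate, WithTop.coe_add]
    exact add_le_add_left (add_one_le_valuation_augmentation v hK' hlam hN hδ hΦ) _
  simp only [actK_sub_single_one, Nat.cast_one]
  refine ⟨fun hd => ?_, fun hd => ?_⟩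
  · obtain ⟨u, hu, happrox⟩ := exists_unit_sub_lam_le v hK' hlam hN (by simpa using hlam2)
      ((hyp i hi hin t).1 hd)
    exact ⟨u, hu, by rw [sub_right_comm]; exact v.map_le_sub happrox hε⟩
  · exact v.map_le_sub (WithTop.coe_add_one_le_of_lt ((hyp i hi hin t).2 hd)) hε

/-- Proposition 2.2 (scaf1). -/
theorem stmt_0 (p n : ℕ) (hp : p.Prime) (hn : 1 ≤ n)
    (K L : Type) [Field K] [Field L] [Algebra K L] [IsGalois K L] [FiniteDimensional K L]
    (hdeg : Nat.card (L ≃ₐ[K] L) = p ^ n)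
    (vL : L → WithTop ℤ) (hctx : LocalCtx p n K L vL)
    (b : ℕ → ℤ) (hb : IsRamBreaks p n K L vL b)
    (hpb : ∀ i : ℕ, 1 ≤ i → i ≤ n → ¬ ((p : ℤ) ∣ b i))
    (afrak : ℕ → ℕ) (hafrak : IsAfrak p n b afrak)
    (Φ : ℕ → MonoidAlgebra K (L ≃ₐ[K] L)) (lam : ℤ → L)
    (hlam1 : ∀ t : ℤ, vL (lam t) = (t : WithTop ℤ))
    (hlam2 : ∀ t₁ t₂ : ℤ, ((p : ℤ) ^ n) ∣ (t₁ - t₂) →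
      ∃ k : K, lam t₁ = algebraMap K L k * lam t₂)
    (hyp : ∀ i : ℕ, 1 ≤ i → i ≤ n → ∀ t : ℤ,
      (1 ≤ digit p (afrak (rres p n t)) (n - i) →
        vL (actK K L (Φ i) (lam t)) = ((t + (p : ℤ) ^ (n - i) * b i : ℤ) : WithTop ℤ)) ∧
      (digit p (afrak (rres p n t)) (n - i) = 0 →
        ((t + (p : ℤ) ^ (n - i) * b i : ℤ) : WithTop ℤ) < vL (actK K L (Φ i) (lam t)))) :
    ∃ Ψ : ℕ → MonoidAlgebra K (L ≃ₐ[K] L),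
      IsGaloisScaffold p n K L vL b afrak Ψ lam 1 :=
  stmt_0_general p n hp K L hdeg vL hctx b hpb afrak Φ lam hlam1 hlam2 hyp
end

section
/- Let ξ ∈ K[G] be nonzero, let β ∈ L ⊗_K L satisfy φ(β) = ξ, and let a, b ∈ ℤ. Then the following are equivalent: (a) [a,b] ∈ G(β); (b) f_ξ(−b−i_0) = a and f_ξ(−b−i_0+1) > a. -/
open scoped TensorProduct

/-!
Write `β = ∑_{j < p^n} c_j ⊗ π^j`, so that `ξ y = ∑_j c_j Tr(π^j y)` and `v(c_j)` is the least `i`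
with `a_{ij} ≠ 0`. Nonzero multiples `k π^j` (`k ∈ K`, `j < p^n`) have pairwise distinct valuations,
so the `π^j` form a `K`-basis in which the valuation of a vector is the minimum over its terms.
Hence the trace-dual basis element `D_j` has valuation `≥ p^n - 1 - d - j`, while
`v(Tr z) ≥ p^n t` whenever `v z ≥ p^n t - d`. Testing `ξ` on `k D_j`, and bounding `ξ y` termwise,
gives `[a, b] ∈ D(β) ↔ f_ξ(-b - i₀) ≤ a`. As `f_ξ` is monotone with
`f_ξ(m + p^n t) = f_ξ(m) + p^n t`, the minimal elements of this region are the points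
`(f_ξ(-b - i₀), b)` at which `f_ξ` jumps.
-/

open Module

namespace AddValuation

variable {R Γ : Type*} [Ring R] [LinearOrderedAddCommMonoidWithTop Γ] (v : AddValuation R Γ)

theorem exists_map_sum_eq_min {ι : Type*} {s : Finset ι} (hs : s.Nonempty) {f : ι → R}
    (hf : ∀ i ∈ s, ∀ j ∈ s, v (f i) = v (f j) → v (f i) ≠ ⊤ → i = j) :
    ∃ j ∈ s, v (∑ i ∈ s, f i) = v (f j) ∧ ∀ i ∈ s, v (f j) ≤ v (f i) := by
  classical
  obtain ⟨j, hj, hmin⟩ := s.exists_min_image (fun i => v (f i)) hs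
  refine ⟨j, hj, ?_, hmin⟩
  by_cases htop : v (f j) = ⊤
  · rw [htop]
    exact top_le_iff.mp (v.map_le_sum fun i hi => htop ▸ hmin i hi)
  · rw [← Finset.add_sum_erase s f hj]
    refine v.map_add_eq_of_lt_left (v.map_lt_sum htop fun i hi => ?_)
    obtain ⟨hij, hi⟩ := Finset.mem_erase.mp hi
    exact lt_of_le_of_ne (hmin i hi) fun h => hij (hf j hj i hi h htop).symm

end AddValuation

lemma Int.eq_of_mul_add_eq_mul_add {e m m' i j : ℤ} (hi : 0 ≤ i ∧ i < e) (hj : 0 ≤ j ∧ j < e)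
    (h : e * m + i = e * m' + j) : i = j := by
  have := congrArg (· % e) h
  simpa [Int.emod_eq_of_lt hi.1 hi.2, Int.emod_eq_of_lt hj.1 hj.2] using this

lemma IsNormValuation.map_one_s4 {L : Type} [Field L] {vL : L → WithTop ℤ}
    (hv : IsNormValuation vL) : vL 1 = 0 := by
  obtain ⟨m, hm⟩ := WithTop.ne_top_iff_exists.mp (hv.2.1 1 one_ne_zero)
  have h := hv.2.2.1 1 1
  rw [one_mul, ← hm, ← WithTop.coe_add, WithTop.coe_eq_coe] at h
  rw [← hm, show m = 0 by omega]
  rfl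

def IsNormValuation.toAddValuation_s4 {L : Type} [Field L] {vL : L → WithTop ℤ}
    (hv : IsNormValuation vL) : AddValuation L (WithTop ℤ) :=
  AddValuation.of vL hv.1 hv.map_one_s4 hv.2.2.2.1 hv.2.2.1

section IntValued

variable {L : Type*} [Field L] (v : AddValuation L (WithTop ℤ))

lemma AddValuation.exists_eq_coe {x : L} (hx : x ≠ 0) : ∃ m : ℤ, v x = m :=
  (WithTop.ne_top_iff_exists.mp (v.ne_top_iff.mpr hx)).imp fun _ h => h.symm

lemma AddValuation.map_zpow_of_eq_coe {x : L} {m : ℤ} (hx : v x = m) (t : ℤ) :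
    v (x ^ t) = ((t * m : ℤ) : WithTop ℤ) := by
  cases t with
  | ofNat k =>
    rw [Int.ofNat_eq_natCast, zpow_natCast, v.map_pow, hx, ← WithTop.coe_nsmul, nsmul_eq_mul]
  | negSucc k =>
    rw [zpow_negSucc, v.map_inv, v.map_pow, hx, ← WithTop.coe_nsmul, nsmul_eq_mul,
      ← WithTop.LinearOrderedAddCommGroup.coe_neg, Int.negSucc_eq]
    congr 1
    push_cast
    ring

end IntValued

section PowerBasis

variable {K L : Type*} [Field K] [Field L] [Algebra K L] (v : AddValuation L (WithTop ℤ))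
  {e : ℕ} {π : L}

lemma val_pow_of_val_eq_one (hπ : v π = 1) (i : ℕ) : v (π ^ i) = ((i : ℤ) : WithTop ℤ) := by
  rw [v.map_pow, hπ, ← WithTop.coe_one, ← WithTop.coe_nsmul, nsmul_one]

lemma val_smul_pow (hπ : v π = 1) {k : K} {m : ℤ} (hk : v (algebraMap K L k) = m) (i : ℕ) :
    v (k • π ^ i) = ((m + i : ℤ) : WithTop ℤ) := by
  rw [Algebra.smul_def, v.map_mul, hk, val_pow_of_val_eq_one v hπ, ← WithTop.coe_add]

lemma exists_val_sum_smul_pow_eq_min (hπ : v π = 1)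
    (hK : ∀ k : K, k ≠ 0 → ∃ m : ℤ, v (algebraMap K L k) = ((e * m : ℤ) : WithTop ℤ))
    [NeZero e] (c : Fin e → K) :
    ∃ j, v (∑ i, c i • π ^ (i : ℕ)) = v (c j • π ^ (j : ℕ)) ∧
      ∀ i, v (c j • π ^ (j : ℕ)) ≤ v (c i • π ^ (i : ℕ)) := by
  obtain ⟨j, -, hsum, hmin⟩ := v.exists_map_sum_eq_min Finset.univ_nonempty
    (f := fun i : Fin e => c i • π ^ (i : ℕ)) fun i _ j _ hij hne => by
      have hci : c i ≠ 0 := fun h => hne (by simp [h])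
      have hcj : c j ≠ 0 := fun h => hne (by simp [hij, h])
      obtain ⟨m, hm⟩ := hK _ hci
      obtain ⟨m', hm'⟩ := hK _ hcj
      rw [val_smul_pow v hπ hm, val_smul_pow v hπ hm', WithTop.coe_eq_coe] at hij
      exact Fin.ext (by exact_mod_cast Int.eq_of_mul_add_eq_mul_add (by omega) (by omega) hij)
  exact ⟨j, hsum, fun i => hmin i (Finset.mem_univ i)⟩

lemma linearIndependent_pow_of_val (hπ : v π = 1)
    (hK : ∀ k : K, k ≠ 0 → ∃ m : ℤ, v (algebraMap K L k) = ((e * m : ℤ) : WithTop ℤ)) :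
    LinearIndependent K (fun i : Fin e => π ^ (i : ℕ)) := by
  rw [Fintype.linearIndependent_iff]
  intro c hc i
  have : NeZero e := ⟨fun he => (he ▸ i).elim0⟩
  obtain ⟨j, hsum, hmin⟩ := exists_val_sum_smul_pow_eq_min v hπ hK c
  rw [hc, v.map_zero] at hsum
  have hi : v (c i • π ^ (i : ℕ)) = ⊤ := top_le_iff.mp (hsum ▸ hmin i)
  have hπ0 : π ≠ 0 := fun h => by simp [h] at hπ
  simpa [hπ0] using hi

variable (K) in
structure IsTotallyRamified (v : AddValuation L (WithTop ℤ)) (e : ℕ) (π : L) : Prop where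
  val_uniformizer : v π = 1
  exists_val_algebraMap :
    ∀ k : K, k ≠ 0 → ∃ m : ℤ, v (algebraMap K L k) = ((e * m : ℤ) : WithTop ℤ)
  finrank_eq : finrank K L = e

namespace IsTotallyRamified

variable {v} [NeZero e]

noncomputable def powBasis (h : IsTotallyRamified K v e π) : Basis (Fin e) K L :=
  basisOfLinearIndependentOfCardEqFinrank
    (linearIndependent_pow_of_val v h.val_uniformizer h.exists_val_algebraMap)
    (by simp [h.finrank_eq])

@[simp]
lemma coe_powBasis (h : IsTotallyRamified K v e π) : ⇑h.powBasis = fun i : Fin e => π ^ (i : ℕ) :=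
  coe_basisOfLinearIndependentOfCardEqFinrank _ _

lemma exists_val_eq_min_repr (h : IsTotallyRamified K v e π) (x : L) :
    ∃ j, v x = v (h.powBasis.repr x j • π ^ (j : ℕ)) ∧
      ∀ i, v (h.powBasis.repr x j • π ^ (j : ℕ)) ≤ v (h.powBasis.repr x i • π ^ (i : ℕ)) := by
  have hx := h.powBasis.sum_repr x
  simp only [coe_powBasis] at hx
  simpa [hx] using exists_val_sum_smul_pow_eq_min v h.val_uniformizer h.exists_val_algebraMap
    (h.powBasis.repr x)

lemma exists_val_algebraMap_eq_mul (h : IsTotallyRamified K v e π) (t : ℤ) :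
    ∃ k : K, v (algebraMap K L k) = ((e * t : ℤ) : WithTop ℤ) := by
  -- the minimal term of `π ^ e` in the basis `π ^ j` must be `k • π ^ 0` with `v k = e`
  obtain ⟨j, hj, -⟩ := h.exists_val_eq_min_repr (π ^ e)
  set k := h.powBasis.repr (π ^ e) j
  have hπe : v (π ^ e) = ((e * 1 + 0 : ℤ) : WithTop ℤ) := by
    rw [v.map_pow, h.val_uniformizer, ← WithTop.coe_one, ← WithTop.coe_nsmul]
    simp
  have hk : k ≠ 0 := fun hk => by simp [hk, hπe] at hj
  obtain ⟨m, hm⟩ := h.exists_val_algebraMap k hk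
  rw [hπe, val_smul_pow v h.val_uniformizer hm, WithTop.coe_eq_coe] at hj
  have he : (0 : ℤ) < e := by exact_mod_cast Nat.pos_of_neZero e
  have hj0 : (0 : ℤ) = j := Int.eq_of_mul_add_eq_mul_add (by omega) (by omega) hj
  rw [← hj0, add_zero, add_zero] at hj
  obtain rfl : m = 1 := (mul_left_cancel₀ he.ne' hj).symm
  refine ⟨k ^ t, ?_⟩
  rw [map_zpow₀, v.map_zpow_of_eq_coe hm, mul_one, mul_comm]

end IsTotallyRamified

end PowerBasis

lemma IsDifferentExp.exists_val_trace_neg {K L : Type} [Field K] [Field L] [Algebra K L]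
    [FiniteDimensional K L] {vL : L → WithTop ℤ} {d : ℤ} (hd : IsDifferentExp K L vL d) :
    ∃ x : L, ((-(d + 1) : ℤ) : WithTop ℤ) ≤ vL x ∧
      vL (algebraMap K L (Algebra.trace K L x)) < 0 := by
  by_contra! h
  have := hd.2 h
  omega

section TraceDual

variable {K L : Type} [Field K] [Field L] [Algebra K L] [FiniteDimensional K L]
  {v : AddValuation L (WithTop ℤ)} {e : ℕ} [NeZero e] {π : L}

lemma IsTotallyRamified.le_val_traceDual [Algebra.IsSeparable K L]
    (h : IsTotallyRamified K v e π) {d : ℤ} (hd : IsDifferentExp K L v d) (j : Fin e) :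
    ((e - 1 - d - j : ℤ) : WithTop ℤ) ≤ v (h.powBasis.traceDual j) := by
  obtain ⟨x₀, hx₀, htr⟩ := hd.exists_val_trace_neg
  by_contra! hlt
  set D := h.powBasis.traceDual j
  have hD0 : D ≠ 0 := h.powBasis.traceDual.ne_zero j
  obtain ⟨δ, hδ⟩ := v.exists_eq_coe hD0
  have hx₀0 : x₀ ≠ 0 := fun h0 => by simp [h0] at htr
  obtain ⟨ν, hν⟩ := v.exists_eq_coe hx₀0
  set w := x₀ * D⁻¹
  have hwv : v w = ((ν - δ : ℤ) : WithTop ℤ) := by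
    rw [v.map_mul, v.map_inv, hν, hδ, ← WithTop.LinearOrderedAddCommGroup.coe_neg,
      ← WithTop.coe_add, sub_eq_add_neg]
  have htrw : Algebra.trace K L x₀ = h.powBasis.repr w j := by
    have := h.powBasis.traceDual.traceDual_repr_apply w j
    rw [Basis.traceDual_traceDual] at this
    rw [this, Algebra.traceForm_apply, mul_assoc, inv_mul_cancel₀ hD0, mul_one]
  -- `Tr x₀` is a coordinate of `w`, so its valuation exceeds `-e`; as it lies in `eℤ`, it is `≥ 0`
  have hc : h.powBasis.repr w j ≠ 0 := fun h0 => by simp [htrw, h0] at htr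
  obtain ⟨m, hm⟩ := h.exists_val_algebraMap _ hc
  obtain ⟨i, hi, hmin⟩ := h.exists_val_eq_min_repr w
  have hwle := hi ▸ hmin j
  rw [hwv, val_smul_pow v h.val_uniformizer hm, WithTop.coe_le_coe] at hwle
  rw [htrw, hm] at htr
  rw [hδ, WithTop.coe_lt_coe] at hlt
  rw [hν, WithTop.coe_le_coe] at hx₀
  have he : (0 : ℤ) < e := by exact_mod_cast Nat.pos_of_neZero e
  have : 0 ≤ m := by nlinarith
  exact (WithTop.coe_lt_coe.mp htr).not_ge (by positivity)

end TraceDual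

lemma IsDifferentExp.le_val_trace {K L : Type} [Field K] [Field L] [Algebra K L]
    [FiniteDimensional K L] {v : AddValuation L (WithTop ℤ)} {d : ℤ}
    (hd : IsDifferentExp K L v d) {k : K} {s : ℤ} (hk : v (algebraMap K L k) = s) {z : L}
    (hz : ((s - d : ℤ) : WithTop ℤ) ≤ v z) :
    (s : WithTop ℤ) ≤ v (algebraMap K L (Algebra.trace K L z)) := by
  have hk0 : algebraMap K L k ≠ 0 := fun h0 => by simp [h0] at hk
  have hz' : ((-d : ℤ) : WithTop ℤ) ≤ v ((algebraMap K L k)⁻¹ * z) := by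
    rw [v.map_mul, v.map_inv, hk, ← WithTop.LinearOrderedAddCommGroup.coe_neg]
    calc ((-d : ℤ) : WithTop ℤ) = ((-s : ℤ) : WithTop ℤ) + ((s - d : ℤ) : WithTop ℤ) := by
          rw [← WithTop.coe_add]; congr 1; ring
      _ ≤ _ := add_le_add_right hz _
  have htr : Algebra.trace K L z = k * Algebra.trace K L ((algebraMap K L k)⁻¹ * z) := by
    rw [← smul_eq_mul, ← map_smul, Algebra.smul_def, ← mul_assoc, mul_inv_cancel₀ hk0, one_mul]
  rw [htr, map_mul, v.map_mul, hk]
  exact le_add_of_nonneg_right (hd.1 _ hz')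

section GroupAlgebra

variable {K L : Type} [Field K] [Field L] [Algebra K L]

lemma phi_tmul_apply [FiniteDimensional K L] (x z : L) (σ : L ≃ₐ[K] L) :
    phi K L (x ⊗ₜ[K] z) σ = x * σ z := by
  classical
  rw [phi, LinearMap.sum_apply, Finsupp.finsetSum_apply]
  simp only [LinearMap.coe_comp, Function.comp_apply, Finsupp.lsingle_apply,
    Finsupp.single_apply, Finset.sum_ite_eq', Finset.mem_univ, if_true]
  simp [phiAux]

lemma actK_algebraMap_mul (ξ : MonoidAlgebra K (L ≃ₐ[K] L)) (k : K) (y : L) :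
    actK K L ξ (algebraMap K L k * y) = algebraMap K L k * actK K L ξ y := by
  simp only [actK, Finsupp.mul_sum, map_mul, AlgEquiv.commutes]
  exact Finsupp.sum_congr fun σ _ => by ring

lemma actK_eq_sum_trace [FiniteDimensional K L] [IsGalois K L]
    {ξ : MonoidAlgebra K (L ≃ₐ[K] L)} {β : L ⊗[K] L} {ι : Type*} {s : Finset ι} {c z : ι → L}
    (hβ : β = ∑ j ∈ s, c j ⊗ₜ[K] z j)
    (hphi : ∀ σ : L ≃ₐ[K] L, phi K L β σ = algebraMap K L (ξ.coeff σ)) (y : L) :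
    actK K L ξ y = ∑ j ∈ s, c j * algebraMap K L (Algebra.trace K L (z j * y)) := by
  rw [actK, Finsupp.sum_fintype _ _ fun σ => by rw [map_zero, zero_mul]]
  simp_rw [← hphi, hβ, map_sum, Finsupp.finsetSum_apply, phi_tmul_apply, Finset.sum_mul,
    trace_eq_sum_automorphisms, map_mul, Finset.mul_sum]
  rw [Finset.sum_comm]
  exact Finset.sum_congr rfl fun j _ => Finset.sum_congr rfl fun σ _ => by ring

end GroupAlgebra

section ActionValuation

variable {K L : Type} [Field K] [Field L] [Algebra K L] [FiniteDimensional K L]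
  {v : AddValuation L (WithTop ℤ)} {e : ℕ} [NeZero e] {π : L} {d : ℤ}
  {ξ : MonoidAlgebra K (L ≃ₐ[K] L)} {c : ℕ → L}

lemma IsTotallyRamified.exists_val_actK_eq [Algebra.IsSeparable K L]
    (h : IsTotallyRamified K v e π) (hd : IsDifferentExp K L v d)
    (hact : ∀ y, actK K L ξ y =
      ∑ j ∈ Finset.range e, c j * algebraMap K L (Algebra.trace K L (π ^ j * y)))
    {j : ℕ} (hj : j < e) (t : ℤ) :
    ∃ y, ((e * t + (e - 1 - d - j) : ℤ) : WithTop ℤ) ≤ v y ∧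
      v (actK K L ξ y) = ((e * t : ℤ) : WithTop ℤ) + v (c j) := by
  obtain ⟨k, hk⟩ := h.exists_val_algebraMap_eq_mul t
  set D := h.powBasis.traceDual ⟨j, hj⟩
  have hD : actK K L ξ D = c j := by
    have htr (i : Fin e) :
        Algebra.trace K L (π ^ (i : ℕ) * D) = if i = ⟨j, hj⟩ then 1 else 0 := by
      simpa using h.powBasis.trace_mul_traceDual i ⟨j, hj⟩
    simp [hact, Finset.sum_range, htr]
  refine ⟨algebraMap K L k * D, ?_, ?_⟩
  · rw [v.map_mul, hk, WithTop.coe_add]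
    exact add_le_add_right (h.le_val_traceDual hd ⟨j, hj⟩) _
  · rw [actK_algebraMap_mul, hD, v.map_mul, hk]

lemma IsTotallyRamified.le_val_actK (h : IsTotallyRamified K v e π) (hd : IsDifferentExp K L v d)
    (hact : ∀ y, actK K L ξ y =
      ∑ j ∈ Finset.range e, c j * algebraMap K L (Algebra.trace K L (π ^ j * y)))
    {y : L} {M : ℤ}
    (hy : ∀ j < e, ∃ t : ℤ, ((e * t - d - j : ℤ) : WithTop ℤ) ≤ v y ∧
      ((M - e * t : ℤ) : WithTop ℤ) ≤ v (c j)) :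
    (M : WithTop ℤ) ≤ v (actK K L ξ y) := by
  rw [hact]
  refine v.map_le_sum fun j hj => ?_
  obtain ⟨t, hyt, hct⟩ := hy j (Finset.mem_range.mp hj)
  obtain ⟨k, hk⟩ := h.exists_val_algebraMap_eq_mul t
  have hz : ((e * t - d : ℤ) : WithTop ℤ) ≤ v (π ^ j * y) := by
    rw [v.map_mul, val_pow_of_val_eq_one v h.val_uniformizer]
    calc ((e * t - d : ℤ) : WithTop ℤ)
        = ((j : ℤ) : WithTop ℤ) + ((e * t - d - j : ℤ) : WithTop ℤ) := by
          rw [← WithTop.coe_add]; congr 1; ring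
      _ ≤ _ := add_le_add_right hyt _
  have htr := hd.le_val_trace hk hz
  rw [v.map_mul]
  calc (M : WithTop ℤ) = ((M - e * t : ℤ) : WithTop ℤ) + ((e * t : ℤ) : WithTop ℤ) := by
        rw [← WithTop.coe_add]; congr 1; ring
    _ ≤ _ := add_le_add hct htr

end ActionValuation

section Expansion

variable {K L : Type*} [Field K] [Field L] [Algebra K L] {v : AddValuation L (WithTop ℤ)}
  {π : L} {a : ℤ → K} {x : L} {N : ℤ}

lemma val_algebraMap_mul_zpow (hπ : v π = 1) (ha : ∀ i, a i ≠ 0 → v (algebraMap K L (a i)) = 0)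
    {i : ℤ} (hi : a i ≠ 0) : v (algebraMap K L (a i) * π ^ i) = i := by
  rw [v.map_mul, ha i hi, v.map_zpow_of_eq_coe hπ, mul_one, zero_add]

lemma le_val_of_forall_coeff (hπ : v π = 1)
    (ha : ∀ i, a i ≠ 0 → v (algebraMap K L (a i)) = 0)
    (happrox : ∀ m : ℤ, (m : WithTop ℤ) <
      v (x - ∑ i ∈ Finset.Icc N m, algebraMap K L (a i) * π ^ i))
    {M : ℤ} (hM : ∀ i, a i ≠ 0 → M ≤ i) : (M : WithTop ℤ) ≤ v x := by
  have hsum : (M : WithTop ℤ) ≤ v (∑ i ∈ Finset.Icc N M, algebraMap K L (a i) * π ^ i) := by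
    refine v.map_le_sum fun i _ => ?_
    by_cases hi : a i = 0
    · simp [hi]
    · rw [val_algebraMap_mul_zpow hπ ha hi]
      exact WithTop.coe_le_coe.mpr (hM i hi)
  rw [← sub_add_cancel x (∑ i ∈ Finset.Icc N M, algebraMap K L (a i) * π ^ i)]
  exact v.map_le_add (happrox M).le hsum

lemma val_le_of_coeff_ne_zero (hπ : v π = 1)
    (ha : ∀ i, a i ≠ 0 → v (algebraMap K L (a i)) = 0) (hN : ∀ i < N, a i = 0)
    (happrox : ∀ m : ℤ, (m : WithTop ℤ) <
      v (x - ∑ i ∈ Finset.Icc N m, algebraMap K L (a i) * π ^ i))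
    {i : ℤ} (hi : a i ≠ 0) : v x ≤ i := by
  obtain ⟨i₀, hi₀, hmin⟩ := Int.exists_least_of_bdd (P := fun i => a i ≠ 0)
    ⟨N, fun i hi => not_lt.mp fun h => hi (hN i h)⟩ ⟨i, hi⟩
  have hsum : ∑ i ∈ Finset.Icc N i₀, algebraMap K L (a i) * π ^ i =
      algebraMap K L (a i₀) * π ^ i₀ := by
    refine Finset.sum_eq_single_of_mem i₀
      (Finset.mem_Icc.mpr ⟨not_lt.mp fun h => hi₀ (hN i₀ h), le_rfl⟩) fun i hi hne => ?_
    have : a i = 0 := by_contra fun h => hne (le_antisymm (Finset.mem_Icc.mp hi).2 (hmin i h))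
    simp [this]
  have hterm := val_algebraMap_mul_zpow hπ ha hi₀
  have := happrox i₀
  rw [hsum, ← hterm] at this
  rw [v.map_eq_of_lt_sub this, hterm]
  exact WithTop.coe_le_coe.mpr (hmin i hi)

end Expansion

/-- `f = f_ξ`, i.e. `f m = min {v(ξ y) : v y ≥ m}`. -/
def IsMinValActK (K : Type) {L : Type} [Field K] [Field L] [Algebra K L]
    (v : AddValuation L (WithTop ℤ)) (ξ : MonoidAlgebra K (L ≃ₐ[K] L)) (f : ℤ → ℤ) : Prop :=
  ∀ m : ℤ, IsLeast {w : WithTop ℤ | ∃ y : L, (m : WithTop ℤ) ≤ v y ∧ v (actK K L ξ y) = w}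
    (f m : WithTop ℤ)

section MinimalValuation

variable {K L : Type} [Field K] [Field L] [Algebra K L] {v : AddValuation L (WithTop ℤ)}
  {ξ : MonoidAlgebra K (L ≃ₐ[K] L)} {f : ℤ → ℤ}

lemma IsMinValActK.monotone (hf : IsMinValActK K v ξ f) : Monotone f := by
  intro m m' hmm'
  obtain ⟨y, hy, hfy⟩ := (hf m').1
  exact WithTop.coe_le_coe.mp (hfy ▸ (hf m).2 ⟨y, (WithTop.coe_le_coe.mpr hmm').trans hy, rfl⟩)

lemma IsMinValActK.le_add (hf : IsMinValActK K v ξ f) {k : K} {s : ℤ}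
    (hk : v (algebraMap K L k) = s) (m : ℤ) : f (m + s) ≤ f m + s := by
  obtain ⟨y, hy, hfy⟩ := (hf m).1
  have := (hf (m + s)).2 ⟨algebraMap K L k * y, ?_, rfl⟩
  · rw [actK_algebraMap_mul, v.map_mul, hk, hfy, ← WithTop.coe_add, WithTop.coe_le_coe] at this
    omega
  · rw [v.map_mul, hk, WithTop.coe_add, add_comm]
    exact add_le_add_right hy _

lemma IsMinValActK.add_mul (hf : IsMinValActK K v ξ f) {P : ℤ}
    (hval : ∀ t : ℤ, ∃ k : K, v (algebraMap K L k) = ((P * t : ℤ) : WithTop ℤ)) (m t : ℤ) :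
    f (m + t * P) = f m + t * P := by
  obtain ⟨k, hk⟩ := hval t
  obtain ⟨k', hk'⟩ := hval (-t)
  have h₁ := hf.le_add (hk.trans (by rw [mul_comm])) m
  have h₂ := hf.le_add (hk'.trans (by rw [mul_neg, mul_comm])) (m + t * P)
  rw [add_neg_cancel_right] at h₂
  omega

end MinimalValuation

section Diagram

variable {p n : ℕ} {K : Type} [Field K] {A : ℤ → ℕ → K}

lemma mem_Gset_iff_of_mem_Dset_iff {f : ℤ → ℤ} {s : ℤ}
    (hD : ∀ a b, (a, b) ∈ Dset p n A ↔ f (-b - s) ≤ a) (hf : Monotone f)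
    (hper : ∀ m t : ℤ, f (m + t * (p : ℤ) ^ n) = f m + t * (p : ℤ) ^ n) (a b : ℤ) :
    (a, b) ∈ Gset p n A ↔ f (-b - s) = a ∧ a < f (-b - s + 1) := by
  constructor
  · rintro ⟨hmem, hmin⟩
    refine ⟨le_antisymm ((hD a b).1 hmem) ?_, ?_⟩
    · by_contra! hlt
      obtain ⟨k, hk₁, hk₂⟩ := hmin _ ((hD _ b).2 le_rfl) ⟨0, by simpa using hlt.le, by simp⟩
      change a ≤ f (-b - s) + k * (p : ℤ) ^ n at hk₁
      change b ≤ b - k * (p : ℤ) ^ n at hk₂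
      linarith
    · by_contra! hge
      have hmem' : (a, b - 1) ∈ Dset p n A :=
        (hD a (b - 1)).2 (by rwa [show -(b - 1) - s = -b - s + 1 by ring])
      obtain ⟨k, hk₁, hk₂⟩ := hmin _ hmem' ⟨0, by simp, by simp⟩
      change a ≤ a + k * (p : ℤ) ^ n at hk₁
      change b ≤ b - 1 - k * (p : ℤ) ^ n at hk₂
      linarith
  · rintro ⟨hfa, hlt⟩
    refine ⟨(hD a b).2 hfa.le, ?_⟩
    rintro ⟨a', b'⟩ hmem ⟨k, hk₁, hk₂⟩
    change a' ≤ a + k * (p : ℤ) ^ n at hk₁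
    change b' ≤ b - k * (p : ℤ) ^ n at hk₂
    have h₁ := (hD a' b').1 hmem
    have h₂ := hf (show -b - s + k * (p : ℤ) ^ n ≤ -b' - s by linarith)
    rw [hper, hfa] at h₂
    have hb : b' = b - k * (p : ℤ) ^ n := by
      by_contra hne
      have h₃ := hf (show -b - s + 1 + k * (p : ℤ) ^ n ≤ -b' - s by omega)
      rw [hper] at h₃
      linarith
    exact ⟨-k, by linarith, by linarith⟩

end Diagram

section DiagramValuation

variable {p n : ℕ} {K L : Type} [Field K] [Field L] [Algebra K L] {A : ℤ → ℕ → K}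
  {v : AddValuation L (WithTop ℤ)} {ξ : MonoidAlgebra K (L ≃ₐ[K] L)} {f : ℤ → ℤ}
  {c : ℕ → L} {d : ℤ}

lemma IsMinValActK.le_of_mem_Dset (hf : IsMinValActK K v ξ f)
    (hcol : ∀ i j, j < p ^ n → A i j ≠ 0 → v (c j) ≤ i)
    (hlow : ∀ j < p ^ n, ∀ t : ℤ, ∃ y,
      (((p : ℤ) ^ n * t + ((p : ℤ) ^ n - 1 - d - j) : ℤ) : WithTop ℤ) ≤ v y ∧
        v (actK K L ξ y) = (((p : ℤ) ^ n * t : ℤ) : WithTop ℤ) + v (c j))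
    {a b : ℤ} (hab : (a, b) ∈ Dset p n A) : f (-b - (d - (p : ℤ) ^ n + 1)) ≤ a := by
  obtain ⟨_, ⟨i, j, hj, hA, rfl⟩, k, hk₁, hk₂⟩ := hab
  change i ≤ a + k * (p : ℤ) ^ n at hk₁
  change (j : ℤ) ≤ b - k * (p : ℤ) ^ n at hk₂
  obtain ⟨y, hy, hξy⟩ := hlow j hj (-k)
  have hfy := (hf (-b - (d - (p : ℤ) ^ n + 1))).2
    ⟨y, le_trans (WithTop.coe_le_coe.mpr (by linarith)) hy, hξy⟩
  refine WithTop.coe_le_coe.mp (hfy.trans ?_)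
  calc (((p : ℤ) ^ n * -k : ℤ) : WithTop ℤ) + v (c j)
      ≤ (((p : ℤ) ^ n * -k : ℤ) : WithTop ℤ) + (i : WithTop ℤ) :=
        add_le_add_right (hcol i j hj hA) _
    _ ≤ (a : WithTop ℤ) := by
        rw [← WithTop.coe_add, WithTop.coe_le_coe]
        linarith

lemma IsMinValActK.mem_Dset_of_le (hf : IsMinValActK K v ξ f)
    (hcol : ∀ j < p ^ n, ∀ M : ℤ, (∀ i, A i j ≠ 0 → M ≤ i) → (M : WithTop ℤ) ≤ v (c j))
    (hup : ∀ (y : L) (M : ℤ), (∀ j < p ^ n, ∃ t : ℤ,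
      (((p : ℤ) ^ n * t - d - j : ℤ) : WithTop ℤ) ≤ v y ∧
        ((M - (p : ℤ) ^ n * t : ℤ) : WithTop ℤ) ≤ v (c j)) → (M : WithTop ℤ) ≤ v (actK K L ξ y))
    {a b : ℤ} (hab : f (-b - (d - (p : ℤ) ^ n + 1)) ≤ a) : (a, b) ∈ Dset p n A := by
  by_contra hD
  obtain ⟨y, hy, hfy⟩ := (hf (-b - (d - (p : ℤ) ^ n + 1))).1
  have hbig : ((a + 1 : ℤ) : WithTop ℤ) ≤ v (actK K L ξ y) := hup y (a + 1) fun j hj => by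
    have hP : (0 : ℤ) < (p : ℤ) ^ n := by exact_mod_cast (Nat.zero_le j).trans_lt hj
    have hq := Int.mul_ediv_add_emod (b - j) ((p : ℤ) ^ n)
    have hr := Int.emod_lt_of_pos (b - j) hP
    have hr₀ := Int.emod_nonneg (b - j) hP.ne'
    set q := (b - j) / (p : ℤ) ^ n
    refine ⟨-q, le_trans (WithTop.coe_le_coe.mpr (by linarith)) hy, hcol j hj _ fun i hi => ?_⟩
    by_contra! hlt
    exact hD ⟨(i, j), ⟨i, j, hj, hi, rfl⟩, q, show i ≤ a + q * (p : ℤ) ^ n by linarith,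
      show (j : ℤ) ≤ b - q * (p : ℤ) ^ n by linarith⟩
  rw [hfy, WithTop.coe_le_coe] at hbig
  omega

end DiagramValuation

theorem stmt_4_general (p n : ℕ)
    (K L : Type) [Field K] [Field L] [Algebra K L] [IsGalois K L] [FiniteDimensional K L]
    (hdeg : Nat.card (L ≃ₐ[K] L) = p ^ n)
    (vL : L → WithTop ℤ) (hctx : LocalCtx p n K L vL)
    (πL : L) (hπ : vL πL = 1) (𝒯 : Set K) (h𝒯 : IsTeichmuller K L vL 𝒯)
    (d : ℤ) (hd : IsDifferentExp K L vL d)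
    (ξ : MonoidAlgebra K (L ≃ₐ[K] L))
    (β : L ⊗[K] L) (A : ℤ → ℕ → K) (hA : IsExpansion p n K L vL 𝒯 πL β A)
    (hphiβ : ∀ σ : L ≃ₐ[K] L, phi K L β σ = algebraMap K L (ξ.coeff σ))
    (fξ : ℤ → ℤ)
    (hf : ∀ m : ℤ, IsLeast
      {v : WithTop ℤ | ∃ y : L, (m : WithTop ℤ) ≤ vL y ∧ vL (actK K L ξ y) = v}
      ((fξ m : ℤ) : WithTop ℤ))
    (a b : ℤ) :
    (a, b) ∈ Gset p n A ↔
      (fξ (-b - (d - (p : ℤ) ^ n + 1)) = a ∧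
        a < fξ (-b - (d - (p : ℤ) ^ n + 1) + 1)) := by
  obtain ⟨hv, -, hK, -, -⟩ := hctx
  obtain ⟨v, rfl⟩ : ∃ v : AddValuation L (WithTop ℤ), ⇑v = vL := ⟨hv.toAddValuation_s4, rfl⟩
  obtain ⟨hT, N, c, hN, hβ, happrox⟩ := hA
  have hfin : finrank K L = p ^ n := (IsGalois.card_aut_eq_finrank K L).symm.trans hdeg
  have : NeZero (p ^ n) := ⟨hfin ▸ finrank_pos.ne'⟩
  have hR : IsTotallyRamified K v (p ^ n) πL := ⟨hπ, by simpa using hK, hfin⟩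
  have hcoef (j : ℕ) (i : ℤ) (hi : A i j ≠ 0) : v (algebraMap K L (A i j)) = 0 :=
    h𝒯.2.1 _ (hT i j) hi
  have hact := actK_eq_sum_trace hβ hphiβ
  have hf : IsMinValActK K v ξ fξ := hf
  have hD (a b : ℤ) : (a, b) ∈ Dset p n A ↔ fξ (-b - (d - (p : ℤ) ^ n + 1)) ≤ a :=
    ⟨hf.le_of_mem_Dset
      (fun i j hj hi => val_le_of_coeff_ne_zero hπ (hcoef j) (hN j) (happrox j hj) hi)
      (fun j hj t => by exact_mod_cast hR.exists_val_actK_eq hd hact hj t),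
    hf.mem_Dset_of_le (c := c)
      (fun j hj M hM => le_val_of_forall_coeff hπ (hcoef j) (happrox j hj) hM)
      (fun y M hy => hR.le_val_actK hd hact (by exact_mod_cast hy))⟩
  exact mem_Gset_iff_of_mem_Dset_iff hD hf.monotone
    (hf.add_mul fun t => by exact_mod_cast hR.exists_val_algebraMap_eq_mul t) a b

/-- Corollary 3.5 (fxi). -/
theorem stmt_4 (p n : ℕ) (hp : p.Prime) (hn : 1 ≤ n)
    (K L : Type) [Field K] [Field L] [Algebra K L] [IsGalois K L] [FiniteDimensional K L]
    (hdeg : Nat.card (L ≃ₐ[K] L) = p ^ n)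
    (vL : L → WithTop ℤ) (hctx : LocalCtx p n K L vL)
    (πL : L) (hπ : vL πL = 1) (𝒯 : Set K) (h𝒯 : IsTeichmuller K L vL 𝒯)
    (d : ℤ) (hd : IsDifferentExp K L vL d)
    (ξ : MonoidAlgebra K (L ≃ₐ[K] L)) (hξ : ξ ≠ 0)
    (β : L ⊗[K] L) (A : ℤ → ℕ → K) (hA : IsExpansion p n K L vL 𝒯 πL β A)
    (hphiβ : ∀ σ : L ≃ₐ[K] L, phi K L β σ = algebraMap K L (ξ.coeff σ))
    (fξ : ℤ → ℤ)
    (hf : ∀ m : ℤ, IsLeast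
      {v : WithTop ℤ | ∃ y : L, (m : WithTop ℤ) ≤ vL y ∧ vL (actK K L ξ y) = v}
      ((fξ m : ℤ) : WithTop ℤ))
    (a b : ℤ) :
    (a, b) ∈ Gset p n A ↔
      (fξ (-b - (d - (p : ℤ) ^ n + 1)) = a ∧
        a < fξ (-b - (d - (p : ℤ) ^ n + 1) + 1)) :=
  stmt_4_general p n K L hdeg vL hctx πL hπ 𝒯 h𝒯 d hd ξ β A hA hphiβ fξ hf a b
end

section
/- Suppose p ∤ b_i for 1 ≤ i ≤ n. Then the map r∘(−𝔟) : S_{p^n} → S_{p^n}, sending s to the least nonnegative residue of −𝔟(s) modulo p^n, is a bijection. -/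
open scoped TensorProduct

/-- `bfrak` with arbitrary weights `c i` in place of `b (n - i)`, a family closed under
removing the lowest digit. -/
def digitWeightedSum (p : ℕ) (c : ℕ → ℤ) (n s : ℕ) : ℤ :=
  ∑ i ∈ Finset.range n, (digit p s i : ℤ) * (p : ℤ) ^ i * c i

lemma bfrak_eq_digitWeightedSum (p n : ℕ) (b : ℕ → ℤ) :
    bfrak p n b = digitWeightedSum p (fun i => b (n - i)) n :=
  rfl

lemma digit_zero (p s : ℕ) : digit p s 0 = s % p := by
  simp [digit]

lemma digit_succ (p s i : ℕ) : digit p s (i + 1) = digit p (s / p) i := by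
  rw [digit, digit, Nat.div_div_eq_div_mul, pow_succ']

lemma digitWeightedSum_succ (p : ℕ) (c : ℕ → ℤ) (n s : ℕ) :
    digitWeightedSum p c (n + 1) s =
      (s % p : ℕ) * c 0 + p * digitWeightedSum p (fun i => c (i + 1)) n (s / p) := by
  rw [digitWeightedSum, Finset.sum_range_succ', digitWeightedSum, Finset.mul_sum, add_comm]
  simp only [digit_zero, digit_succ, pow_zero, mul_one, pow_succ]
  congr 1
  exact Finset.sum_congr rfl fun i _ => by ring

/-- Modulo `p` only the lowest digit survives, and as `c 0` is a unit mod `p` the congruence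
determines it; cancelling it and dividing by `p` leaves the same problem for `s / p`. -/
theorem eq_of_digitWeightedSum_modEq {p : ℕ} (hp : p.Prime) {n : ℕ} {c : ℕ → ℤ}
    (hc : ∀ i < n, ¬ (p : ℤ) ∣ c i) {s s' : ℕ} (hs : s < p ^ n) (hs' : s' < p ^ n)
    (h : digitWeightedSum p c n s ≡ digitWeightedSum p c n s' [ZMOD p ^ n]) : s = s' := by
  induction n generalizing c s s' with
  | zero => simp only [pow_zero, Nat.lt_one_iff] at hs hs'; rw [hs, hs']
  | succ n ih =>
    rw [digitWeightedSum_succ, digitWeightedSum_succ] at h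
    have hlow : s % p = s' % p := by
      have hmodp : (s % p : ℕ) * c 0 ≡ (s' % p : ℕ) * c 0 [ZMOD p] := by
        simpa [Int.ModEq, Int.add_mul_emod_self_left] using
          h.of_dvd (dvd_pow_self (p : ℤ) n.succ_ne_zero)
      have hdvd : (p : ℤ) ∣ (((s' % p : ℕ) : ℤ) - (s % p : ℕ)) * c 0 := by
        rw [sub_mul]; exact Int.modEq_iff_dvd.mp hmodp
      have hdigit := (Int.Prime.dvd_mul' hp hdvd).resolve_right (hc 0 n.succ_pos)
      simpa [Nat.ModEq] using Int.natCast_modEq_iff.mp (Int.modEq_iff_dvd.mpr hdigit)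
    have hhigh : s / p = s' / p := by
      refine ih (fun i hi => hc (i + 1) (by omega)) ?_ ?_ ?_
      · exact Nat.div_lt_of_lt_mul (by rwa [← pow_succ'])
      · exact Nat.div_lt_of_lt_mul (by rwa [← pow_succ'])
      · rw [hlow] at h
        exact Int.ModEq.mul_left_cancel' (c := p) (by exact_mod_cast hp.ne_zero)
          (by rw [← pow_succ']; exact Int.ModEq.add_left_cancel' _ h)
    rw [← Nat.mod_add_div s p, ← Nat.mod_add_div s' p, hlow, hhigh]

lemma rres_lt {p : ℕ} (hp : 0 < p) (n : ℕ) (t : ℤ) : rres p n t < p ^ n := by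
  have hpn : (0 : ℤ) < (p : ℤ) ^ n := by positivity
  rw [rres, Int.toNat_lt (Int.emod_nonneg t hpn.ne')]
  exact_mod_cast Int.emod_lt_of_pos t hpn

lemma modEq_of_rres_eq {p : ℕ} (hp : 0 < p) {n : ℕ} {t t' : ℤ} (h : rres p n t = rres p n t') :
    t ≡ t' [ZMOD p ^ n] := by
  have hpn : (0 : ℤ) < (p : ℤ) ^ n := by positivity
  rw [Int.ModEq, ← Int.toNat_of_nonneg (Int.emod_nonneg t hpn.ne'),
    ← Int.toNat_of_nonneg (Int.emod_nonneg t' hpn.ne')]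
  exact congrArg _ h

theorem stmt_15_general (p n : ℕ) (hp : p.Prime) (b : ℕ → ℤ)
    (hpb : ∀ i : ℕ, 1 ≤ i → i ≤ n → ¬ ((p : ℤ) ∣ b i)) :
    Set.BijOn (fun s : ℕ => rres p n (-(bfrak p n b s)))
      {s : ℕ | s < p ^ n} {s : ℕ | s < p ^ n} := by
  have hmaps : Set.MapsTo (fun s : ℕ => rres p n (-(bfrak p n b s)))
      {s : ℕ | s < p ^ n} {s : ℕ | s < p ^ n} :=
    fun s _ => rres_lt hp.pos n _
  refine ((Set.finite_Iio (p ^ n)).injOn_iff_bijOn_of_mapsTo hmaps).mp ?_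
  intro s hs s' hs' heq
  rw [bfrak_eq_digitWeightedSum] at heq
  exact eq_of_digitWeightedSum_modEq hp (fun i hi => hpb (n - i) (by omega) (by omega)) hs hs'
    (Int.neg_modEq_neg.mp (modEq_of_rres_eq hp.pos heq))

/-- If p ∤ bᵢ for 1 ≤ i ≤ n, then r ∘ (-𝔟) is a bijection of S_{p^n}. -/
theorem stmt_15 (p n : ℕ) (hp : p.Prime) (hn : 1 ≤ n) (b : ℕ → ℤ)
    (hpb : ∀ i : ℕ, 1 ≤ i → i ≤ n → ¬ ((p : ℤ) ∣ b i)) :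
    Set.BijOn (fun s : ℕ => rres p n (-(bfrak p n b s)))
      {s : ℕ | s < p ^ n} {s : ℕ | s < p ^ n} :=
  stmt_15_general p n hp b hpb
end
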